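/- Let N ≥ 1 and let p > 1 be a real number. Let u : ℝ^N → ℝ be a C³, ℤ^N-periodic admissible function satisfying det A[u](x) = (1 + ‖∇u(x)‖²)^p for all x ∈ ℝ^N. Then u is constant. -/

import Mathlib

open Matrix Real

/-- The `i`-th partial derivative (gradient component) of `u` at `x`. -/
noncomputable def grad {N : ℕ} (u : (Fin N → ℝ) → ℝ) (x : Fin N → ℝ) (i : Fin N) : ℝ :=
  fderiv ℝ u x (Pi.single i 1)

/-- The `(i,j)` entry of the Hessian matrix of `u` at `x`. -/
noncomputable def hess {N : ℕ} (u : (Fin N → ℝ) → ℝ) (x : Fin N → ℝ) (i j : Fin N) : ℝ :=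
  fderiv ℝ (fun y => fderiv ℝ u y (Pi.single j 1)) x (Pi.single i 1)

/-- The squared norm of the gradient of `u` at `x`. -/
noncomputable def gradSq {N : ℕ} (u : (Fin N → ℝ) → ℝ) (x : Fin N → ℝ) : ℝ :=
  ∑ i, (grad u x i) ^ 2

/-- The Laplacian of `u` at `x` (trace of the Hessian). -/
noncomputable def lap {N : ℕ} (u : (Fin N → ℝ) → ℝ) (x : Fin N → ℝ) : ℝ :=
  ∑ i, hess u x i i

/-- The matrix `A[u](x) = I + ∇u(x) (∇u(x))ᵀ − Hess u(x)`. -/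
noncomputable def amat {N : ℕ} (u : (Fin N → ℝ) → ℝ) (x : Fin N → ℝ) :
    Matrix (Fin N) (Fin N) ℝ :=
  1 + Matrix.of (fun i j => grad u x i * grad u x j) - Matrix.of (fun i j => hess u x i j)

/-- `u` is `ℤ^N`-periodic. -/
def ZPeriodic {N : ℕ} (u : (Fin N → ℝ) → ℝ) : Prop :=
  ∀ (x : Fin N → ℝ) (k : Fin N → ℤ), u (x + fun i => (k i : ℝ)) = u x

/-- `u` is admissible: `A[u](x)` is positive definite for every `x`. -/
def Admissible {N : ℕ} (u : (Fin N → ℝ) → ℝ) : Prop :=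
  ∀ x, (amat u x).PosDef

/-!
Let `x₀` be a maximum point of `‖∇u‖²`, which exists by periodicity, and write `g = ∇u(x₀)`,
`H = Hess u(x₀)`, `A = A[u](x₀)`. The first-order condition at `x₀` is `H g = 0`; the second-order
condition along every line says that `H² + ∂_g Hess u` is negative semidefinite (this uses the
symmetry of the third derivative). Along the line through `x₀` in direction `g` the right-hand side
`(1 + ‖∇u‖²)^p` is maximal at `x₀`, so Jacobi's formula gives `tr (adj A · ∂_g A) = 0`, and
`∂_g A = -∂_g Hess u` because `H g = 0`. As `adj A` is positive definite,
`0 ≥ tr (adj A · (H² + ∂_g Hess u)) = tr (adj A · H Hᵀ)` forces `H = 0`. Then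
`det A = 1 + ‖g‖² = (1 + ‖g‖²)^p` with `p > 1` gives `g = 0`, so `∇u` vanishes identically.
-/

namespace Matrix

variable {n : Type*} [Fintype n]

theorem trace_mul_mul_transpose (A C : Matrix n n ℝ) :
    (A * C * Aᵀ).trace = ∑ m, A m ⬝ᵥ C *ᵥ A m := by
  simp [Matrix.trace, mul_mul_apply]

theorem trace_mul_nonpos_of_posSemidef [DecidableEq n] {B C : Matrix n n ℝ} (hB : B.PosSemidef)
    (hC : ∀ v, v ⬝ᵥ C *ᵥ v ≤ 0) : (B * C).trace ≤ 0 := by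
  open scoped MatrixOrder in
  obtain ⟨D, rfl⟩ := CStarAlgebra.nonneg_iff_eq_star_mul_self.mp hB.nonneg
  rw [star_eq_conjTranspose, conjTranspose_eq_transpose_of_trivial, Matrix.mul_assoc,
    trace_mul_comm, trace_mul_mul_transpose]
  exact Finset.sum_nonpos fun m _ => hC (D m)

theorem PosDef.eq_zero_of_trace_mul_mul_transpose_nonpos {B M : Matrix n n ℝ} (hB : B.PosDef)
    (h : (B * (M * Mᵀ)).trace ≤ 0) : M = 0 := by
  have htrace : (B * (M * Mᵀ)).trace = ∑ m, Mᵀ m ⬝ᵥ B *ᵥ Mᵀ m := by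
    rw [← Matrix.mul_assoc, trace_mul_comm, ← Matrix.mul_assoc, ← trace_mul_mul_transpose,
      transpose_transpose]
  have hnonneg : ∀ m, 0 ≤ Mᵀ m ⬝ᵥ B *ᵥ Mᵀ m := fun m => by
    simpa using hB.posSemidef.dotProduct_mulVec_nonneg (Mᵀ m)
  rw [htrace] at h
  have hzero := (Finset.sum_eq_zero_iff_of_nonneg fun m _ => hnonneg m).mp
    (le_antisymm h (Finset.sum_nonneg fun m _ => hnonneg m))
  have hcol : ∀ m, Mᵀ m = 0 := fun m => by
    by_contra hm
    exact (hB.dotProduct_mulVec_pos hm).ne' (by simpa using hzero m (Finset.mem_univ m))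
  rw [← transpose_eq_zero]
  ext m i
  exact congrFun (hcol m) i

theorem PosDef.adjugate [DecidableEq n] {A : Matrix n n ℝ} (hA : A.PosDef) : A.adjugate.PosDef := by
  have hdet := hA.det_pos
  have hadj : A.adjugate = A.det • A⁻¹ := by
    rw [inv_def, smul_smul, Ring.inverse_eq_inv, mul_inv_cancel₀ hdet.ne', one_smul]
  rw [hadj]
  exact hA.inv.smul hdet

theorem trace_adjugate_mul [DecidableEq n] {R : Type*} [CommRing R] (A B : Matrix n n R) :
    (A.adjugate * B).trace = ∑ k, (A.updateCol k fun i => B i k).det := by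
  refine Finset.sum_congr rfl fun k _ => ?_
  rw [← cramer_apply, cramer_eq_adjugate_mulVec]
  rfl

theorem prod_updateCol_apply_perm [DecidableEq n] {R : Type*} [CommRing R] (A : Matrix n n R)
    (c : n → R) (σ : Equiv.Perm n) (k : n) :
    ∏ j, A.updateCol k c (σ j) j = (∏ j ∈ Finset.univ.erase k, A (σ j) j) * c (σ k) := by
  rw [← Finset.prod_erase_mul _ _ (Finset.mem_univ k), updateCol_self]
  congr 1
  exact Finset.prod_congr rfl fun j hj => updateCol_ne (Finset.ne_of_mem_erase hj)

theorem hasDerivAt_det [DecidableEq n] {M : ℝ → Matrix n n ℝ} {M' : Matrix n n ℝ} {t : ℝ}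
    (h : ∀ i j, HasDerivAt (fun s => M s i j) (M' i j) t) :
    HasDerivAt (fun s => (M s).det) ((M t).adjugate * M').trace t := by
  have hleibniz : HasDerivAt (fun s => (M s).det)
      (∑ σ : Equiv.Perm n, (Equiv.Perm.sign σ : ℝ) *
        ∑ k, (∏ j ∈ Finset.univ.erase k, M t (σ j) j) • M' (σ k) k) t := by
    simp only [det_apply']
    exact HasDerivAt.fun_sum fun σ _ =>
      (HasDerivAt.fun_finsetProd fun i _ => h (σ i) i).const_mul _
  convert hleibniz using 1
  simp only [trace_adjugate_mul, det_apply', prod_updateCol_apply_perm, smul_eq_mul, Finset.mul_sum]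
  exact Finset.sum_comm

end Matrix

theorem ContinuousLinearMap.dotProduct_toMatrix₂'_mulVec {N : ℕ}
    (b : (Fin N → ℝ) →L[ℝ] (Fin N → ℝ) →L[ℝ] ℝ) (a c : Fin N → ℝ) :
    a ⬝ᵥ LinearMap.toMatrix₂' ℝ b.toLinearMap₁₂ *ᵥ c = b a c := by
  rw [← Matrix.toLinearMap₂'_apply']
  exact LinearMap.congr_fun₂ (Matrix.toLinearMap₂'_toMatrix' (R := ℝ) b.toLinearMap₁₂) a c

theorem HasDerivAt.dotProduct {ι : Type*} [Fintype ι] {f g : ℝ → ι → ℝ} {f' g' : ι → ℝ} {t : ℝ}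
    (hf : HasDerivAt f f' t) (hg : HasDerivAt g g' t) :
    HasDerivAt (fun s => f s ⬝ᵥ g s) (f' ⬝ᵥ g t + f t ⬝ᵥ g') t := by
  have := HasDerivAt.fun_sum (u := Finset.univ) fun i _ =>
    (hasDerivAt_pi.1 hf i).fun_mul (hasDerivAt_pi.1 hg i)
  exact this.congr_deriv (by rw [Finset.sum_add_distrib]; rfl)

theorem hasDerivAt_comp_add_smul {E F : Type*} [NormedAddCommGroup E] [NormedSpace ℝ E]
    [NormedAddCommGroup F] [NormedSpace ℝ F] {f : E → F} {x v : E} {t : ℝ}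
    (hf : DifferentiableAt ℝ f (x + t • v)) :
    HasDerivAt (fun s : ℝ => f (x + s • v)) (fderiv ℝ f (x + t • v) v) t :=
  hf.hasFDerivAt.comp_hasDerivAt t (((hasDerivAt_id t).smul_const v).const_add x |>.congr_deriv
    (one_smul ℝ v))

theorem IsLocalMax.nonpos_of_hasDerivAt_of_hasDerivAt {q q' : ℝ → ℝ} {q'' t : ℝ}
    (hmax : IsLocalMax q t) (hq : ∀ s, HasDerivAt q (q' s) s) (hq' : HasDerivAt q' q'' t) :
    q'' ≤ 0 := by
  by_contra! hpos
  have hderiv : deriv q = q' := funext fun s => (hq s).deriv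
  have hmin : IsLocalMin q t := isLocalMin_of_deriv_deriv_pos (by rwa [hderiv, hq'.deriv])
    (by rw [← hmax.deriv_eq_zero]) (hq t).continuousAt
  have hconst : q =ᶠ[nhds t] fun _ => q t := by
    filter_upwards [hmin, hmax] with s h₁ h₂ using le_antisymm h₂ h₁
  have hq'zero : q' =ᶠ[nhds t] fun _ => 0 := by
    simpa [hderiv] using hconst.deriv
  exact hpos.ne' ((hq'.congr_of_eventuallyEq hq'zero.symm).unique (hasDerivAt_const t 0))

theorem ContDiff.differentiable_fderiv {E F : Type*} [NormedAddCommGroup E] [NormedSpace ℝ E]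
    [NormedAddCommGroup F] [NormedSpace ℝ F] {f : E → F} (hf : ContDiff ℝ 2 f) :
    Differentiable ℝ (fderiv ℝ f) :=
  (hf.fderiv_right (m := 1) (by norm_num)).differentiable (by norm_num)

theorem ZPeriodic.exists_forall_le {N : ℕ} {f : (Fin N → ℝ) → ℝ} (hper : ZPeriodic f)
    (hf : Continuous f) : ∃ x₀, ∀ x, f x ≤ f x₀ := by
  obtain ⟨x₀, -, hmax⟩ := (isCompact_Icc (a := (0 : Fin N → ℝ)) (b := 1)).exists_isMaxOn
    ⟨0, Set.left_mem_Icc.mpr zero_le_one⟩ hf.continuousOn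
  refine ⟨x₀, fun x => ?_⟩
  have hmem : (x + fun i => ((-⌊x i⌋ : ℤ) : ℝ)) ∈ Set.Icc (0 : Fin N → ℝ) 1 := by
    constructor <;> intro i <;> simp only [Pi.add_apply, Int.cast_neg, ← sub_eq_add_neg]
    · exact Int.fract_nonneg (x i)
    · exact (Int.fract_lt_one (x i)).le
  rw [← hper x]
  exact hmax hmem

section

variable {N : ℕ} {u : (Fin N → ℝ) → ℝ}

noncomputable def hessian (u : (Fin N → ℝ) → ℝ) (x : Fin N → ℝ) : Matrix (Fin N) (Fin N) ℝ :=
  Matrix.of (hess u x)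

noncomputable def hessDeriv (u : (Fin N → ℝ) → ℝ) (x v : Fin N → ℝ) :
    Matrix (Fin N) (Fin N) ℝ :=
  Matrix.of fun i j => fderiv ℝ (fun y => hess u y i j) x v

theorem gradSq_eq_dotProduct (x : Fin N → ℝ) : gradSq u x = grad u x ⬝ᵥ grad u x := by
  simp [gradSq, dotProduct, sq]

theorem gradSq_nonneg (x : Fin N → ℝ) : 0 ≤ gradSq u x :=
  Finset.sum_nonneg fun _ _ => sq_nonneg _

theorem continuous_gradSq (hu : ContDiff ℝ 1 u) : Continuous (gradSq u) := by
  have := hu.continuous_fderiv one_ne_zero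
  unfold gradSq grad
  fun_prop

theorem fderiv_eq_zero_of_gradSq_eq_zero {x : Fin N → ℝ} (h : gradSq u x = 0) :
    fderiv ℝ u x = 0 := by
  rw [gradSq_eq_dotProduct, dotProduct_self_eq_zero] at h
  ext v
  rw [← Finset.univ_sum_single v, map_sum]
  refine Finset.sum_eq_zero fun i _ => ?_
  rw [← mul_one (v i), ← smul_eq_mul, Pi.single_smul', map_smul]
  exact smul_eq_zero_of_right _ (congrFun h i)

theorem zPeriodic_gradSq (hper : ZPeriodic u) : ZPeriodic (gradSq u) := fun x k => by
  have hfderiv : fderiv ℝ u (x + fun i => (k i : ℝ)) = fderiv ℝ u x := by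
    rw [← fderiv_comp_add_right]
    exact congrArg (fderiv ℝ · x) (funext fun y => hper y k)
  simp only [gradSq, grad, hfderiv]

theorem hess_eq_fderiv_fderiv (hu : ContDiff ℝ 2 u) (x : Fin N → ℝ) (i j : Fin N) :
    hess u x i j = fderiv ℝ (fderiv ℝ u) x (Pi.single i 1) (Pi.single j 1) := by
  rw [hess, fderiv_clm_apply (hu.differentiable_fderiv x) (differentiableAt_const _)]
  simp

theorem fderiv_fderiv_comm (hu : ContDiff ℝ 2 u) (x a b : Fin N → ℝ) :
    fderiv ℝ (fderiv ℝ u) x a b = fderiv ℝ (fderiv ℝ u) x b a :=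
  hu.contDiffAt.isSymmSndFDerivAt (by simp) a b

theorem fderiv_fderiv_fderiv_comm (hu : ContDiff ℝ 3 u) (x a b c : Fin N → ℝ) :
    fderiv ℝ (fderiv ℝ (fderiv ℝ u)) x a b c = fderiv ℝ (fderiv ℝ (fderiv ℝ u)) x b a c :=
  congrArg (· c) ((hu.fderiv_right (m := 2) (by norm_num)).contDiffAt.isSymmSndFDerivAt
    (by simp) a b)

theorem dotProduct_hessian_mulVec (hu : ContDiff ℝ 2 u) (x a b : Fin N → ℝ) :
    a ⬝ᵥ hessian u x *ᵥ b = fderiv ℝ (fderiv ℝ u) x a b := by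
  rw [← ContinuousLinearMap.dotProduct_toMatrix₂'_mulVec]
  congr
  ext i j
  exact hess_eq_fderiv_fderiv hu x i j

theorem hessian_transpose (hu : ContDiff ℝ 2 u) (x : Fin N → ℝ) :
    (hessian u x)ᵀ = hessian u x := by
  ext i j
  simp only [hessian, Matrix.transpose_apply, Matrix.of_apply, hess_eq_fderiv_fderiv hu,
    fderiv_fderiv_comm hu x (Pi.single j 1)]

theorem hessDeriv_apply (hu : ContDiff ℝ 3 u) (x v : Fin N → ℝ) (i j : Fin N) :
    hessDeriv u x v i j =
      fderiv ℝ (fderiv ℝ (fderiv ℝ u)) x v (Pi.single i 1) (Pi.single j 1) := by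
  have hu2 : ContDiff ℝ 2 u := hu.of_le (by norm_num)
  have hd : Differentiable ℝ (fderiv ℝ (fderiv ℝ u)) :=
    (hu.fderiv_right (m := 2) (by norm_num)).differentiable_fderiv
  simp only [hessDeriv, Matrix.of_apply, hess_eq_fderiv_fderiv hu2]
  rw [fderiv_clm_apply ((hd x).clm_apply (differentiableAt_const _)) (differentiableAt_const _),
    fderiv_clm_apply (hd x) (differentiableAt_const _)]
  simp

theorem dotProduct_hessDeriv_mulVec (hu : ContDiff ℝ 3 u) (x v a b : Fin N → ℝ) :
    a ⬝ᵥ hessDeriv u x v *ᵥ b = fderiv ℝ (fderiv ℝ (fderiv ℝ u)) x v a b := by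
  rw [← ContinuousLinearMap.dotProduct_toMatrix₂'_mulVec]
  congr
  ext i j
  exact hessDeriv_apply hu x v i j

theorem differentiable_hess (hu : ContDiff ℝ 3 u) (i j : Fin N) :
    Differentiable ℝ fun y => hess u y i j := by
  have hd : Differentiable ℝ (fderiv ℝ (fderiv ℝ u)) :=
    (hu.fderiv_right (m := 2) (by norm_num)).differentiable_fderiv
  simp only [hess_eq_fderiv_fderiv (hu.of_le (by norm_num) : ContDiff ℝ 2 u)]
  fun_prop

theorem hasDerivAt_grad_comp_add_smul (hu : ContDiff ℝ 2 u) (x v : Fin N → ℝ) (t : ℝ) :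
    HasDerivAt (fun s => grad u (x + s • v)) (hessian u (x + t • v) *ᵥ v) t := by
  refine hasDerivAt_pi.2 fun i => ?_
  have h := (hasDerivAt_comp_add_smul (x := x) (v := v) (hu.differentiable_fderiv _)).clm_apply
    (hasDerivAt_const t (Pi.single i 1 : Fin N → ℝ))
  rw [← single_one_dotProduct i (hessian u (x + t • v) *ᵥ v), dotProduct_hessian_mulVec hu,
    fderiv_fderiv_comm hu]
  simpa [grad] using h

theorem hasDerivAt_hessian_mulVec_comp_add_smul (hu : ContDiff ℝ 3 u) (x v w : Fin N → ℝ)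
    (t : ℝ) :
    HasDerivAt (fun s => hessian u (x + s • v) *ᵥ w) (hessDeriv u (x + t • v) v *ᵥ w) t := by
  refine hasDerivAt_pi.2 fun i => ?_
  simp only [Matrix.mulVec, dotProduct, hessian, hessDeriv, Matrix.of_apply]
  exact HasDerivAt.fun_sum fun j _ =>
    (hasDerivAt_comp_add_smul (differentiable_hess hu i j _)).mul_const (w j)

theorem hasDerivAt_gradSq_comp_add_smul (hu : ContDiff ℝ 2 u) (x v : Fin N → ℝ) (t : ℝ) :
    HasDerivAt (fun s => gradSq u (x + s • v))
      (2 * (grad u (x + t • v) ⬝ᵥ hessian u (x + t • v) *ᵥ v)) t := by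
  have h := (hasDerivAt_grad_comp_add_smul hu x v t).dotProduct
    (hasDerivAt_grad_comp_add_smul hu x v t)
  simp only [gradSq_eq_dotProduct]
  convert h using 1
  rw [dotProduct_comm]
  ring

theorem det_amat_of_hessian_eq_zero {x : Fin N → ℝ} (h : hessian u x = 0) :
    (amat u x).det = 1 + gradSq u x := by
  have hA : amat u x =
      1 + Matrix.replicateCol Unit (grad u x) * Matrix.replicateRow Unit (grad u x) := by
    ext i j
    have hij : hess u x i j = 0 := congrFun (congrFun h i) j
    simp [amat, hij, Matrix.mul_apply]
  rw [hA, Matrix.det_one_add_replicateCol_mul_replicateRow, gradSq_eq_dotProduct]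

variable {x₀ : Fin N → ℝ}

theorem isLocalMax_gradSq_comp_add_smul (hmax : ∀ x, gradSq u x ≤ gradSq u x₀)
    (v : Fin N → ℝ) : IsLocalMax (fun s : ℝ => gradSq u (x₀ + s • v)) 0 :=
  Filter.Eventually.of_forall fun s => by simpa using hmax (x₀ + s • v)

theorem hessian_mulVec_grad_eq_zero (hu : ContDiff ℝ 2 u)
    (hmax : ∀ x, gradSq u x ≤ gradSq u x₀) : hessian u x₀ *ᵥ grad u x₀ = 0 := by
  have hcrit : ∀ v, grad u x₀ ⬝ᵥ hessian u x₀ *ᵥ v = 0 := fun v => by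
    simpa using (isLocalMax_gradSq_comp_add_smul hmax v).hasDerivAt_eq_zero
      (hasDerivAt_gradSq_comp_add_smul hu x₀ v 0)
  apply dotProduct_self_eq_zero.mp
  rw [dotProduct_hessian_mulVec hu, fderiv_fderiv_comm hu, ← dotProduct_hessian_mulVec hu]
  exact hcrit _

theorem dotProduct_hessian_mul_hessian_add_hessDeriv_mulVec_nonpos (hu : ContDiff ℝ 3 u)
    (hmax : ∀ x, gradSq u x ≤ gradSq u x₀) (v : Fin N → ℝ) :
    v ⬝ᵥ (hessian u x₀ * hessian u x₀ + hessDeriv u x₀ (grad u x₀)) *ᵥ v ≤ 0 := by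
  have hu2 : ContDiff ℝ 2 u := hu.of_le (by norm_num)
  have hsecond : HasDerivAt
      (fun s : ℝ => 2 * (grad u (x₀ + s • v) ⬝ᵥ hessian u (x₀ + s • v) *ᵥ v))
      (2 * (hessian u x₀ *ᵥ v ⬝ᵥ hessian u x₀ *ᵥ v + grad u x₀ ⬝ᵥ hessDeriv u x₀ v *ᵥ v)) 0 := by
    simpa using ((hasDerivAt_grad_comp_add_smul hu2 x₀ v 0).dotProduct
      (hasDerivAt_hessian_mulVec_comp_add_smul hu x₀ v v 0)).const_mul 2
  have hnonpos := (isLocalMax_gradSq_comp_add_smul hmax v).nonpos_of_hasDerivAt_of_hasDerivAt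
    (hasDerivAt_gradSq_comp_add_smul hu2 x₀ v) hsecond
  have hsq : v ⬝ᵥ (hessian u x₀ * hessian u x₀) *ᵥ v =
      hessian u x₀ *ᵥ v ⬝ᵥ hessian u x₀ *ᵥ v := by
    rw [← Matrix.mulVec_mulVec, dotProduct_hessian_mulVec hu2, fderiv_fderiv_comm hu2,
      ← dotProduct_hessian_mulVec hu2]
  have hthird : v ⬝ᵥ hessDeriv u x₀ (grad u x₀) *ᵥ v = grad u x₀ ⬝ᵥ hessDeriv u x₀ v *ᵥ v := by
    rw [dotProduct_hessDeriv_mulVec hu, dotProduct_hessDeriv_mulVec hu,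
      fderiv_fderiv_fderiv_comm hu]
  rw [Matrix.add_mulVec, dotProduct_add, hsq, hthird]
  linarith

theorem trace_adjugate_amat_mul_hessDeriv_eq_zero (hu : ContDiff ℝ 3 u)
    (hmax : ∀ x, gradSq u x ≤ gradSq u x₀) {φ : ℝ → ℝ} (hφ : MonotoneOn φ (Set.Ici 0))
    (hdet : ∀ x, (amat u x).det = φ (gradSq u x)) :
    ((amat u x₀).adjugate * hessDeriv u x₀ (grad u x₀)).trace = 0 := by
  have hu2 : ContDiff ℝ 2 u := hu.of_le (by norm_num)
  have hHg := hessian_mulVec_grad_eq_zero hu2 hmax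
  have hentry : ∀ i j, HasDerivAt (fun s : ℝ => amat u (x₀ + s • grad u x₀) i j)
      ((-hessDeriv u x₀ (grad u x₀)) i j) 0 := by
    intro i j
    have hG := hasDerivAt_pi.1 (hasDerivAt_grad_comp_add_smul hu2 x₀ (grad u x₀) 0)
    have h := (((hG i).fun_mul (hG j)).const_add ((1 : Matrix (Fin N) (Fin N) ℝ) i j)).fun_sub
      (hasDerivAt_comp_add_smul (differentiable_hess hu i j (x₀ + (0 : ℝ) • grad u x₀)))
    simpa [amat, hessDeriv, hHg] using h
  have hlocmax : IsLocalMax (fun s : ℝ => (amat u (x₀ + s • grad u x₀)).det) 0 :=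
    Filter.Eventually.of_forall fun s => by
      simp only [hdet, zero_smul, add_zero]
      exact hφ (gradSq_nonneg _) (gradSq_nonneg _) (hmax _)
  simpa using hlocmax.hasDerivAt_eq_zero (Matrix.hasDerivAt_det hentry)

theorem hessian_eq_zero (hu : ContDiff ℝ 3 u) (hmax : ∀ x, gradSq u x ≤ gradSq u x₀)
    (hadm : (amat u x₀).PosDef) {φ : ℝ → ℝ} (hφ : MonotoneOn φ (Set.Ici 0))
    (hdet : ∀ x, (amat u x).det = φ (gradSq u x)) : hessian u x₀ = 0 := by
  have hadj := hadm.adjugate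
  have h := Matrix.trace_mul_nonpos_of_posSemidef hadj.posSemidef
    (dotProduct_hessian_mul_hessian_add_hessDeriv_mulVec_nonpos hu hmax)
  rw [Matrix.mul_add, Matrix.trace_add,
    trace_adjugate_amat_mul_hessDeriv_eq_zero hu hmax hφ hdet, add_zero] at h
  apply hadj.eq_zero_of_trace_mul_mul_transpose_nonpos
  rwa [hessian_transpose (hu.of_le (by norm_num))]

end

theorem Real.eq_zero_of_one_add_eq_rpow {w p : ℝ} (hw : 0 ≤ w) (hp : 1 < p)
    (h : 1 + w = (1 + w) ^ p) : w = 0 := by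
  by_contra hne
  have hlt := Real.rpow_lt_rpow_of_exponent_lt (x := 1 + w)
    (by linarith [lt_of_le_of_ne hw (Ne.symm hne)]) hp
  rw [Real.rpow_one, ← h] at hlt
  exact lt_irrefl _ hlt

theorem stmt10_general {N : ℕ} (p : ℝ) (hp : 1 < p)
    (u : (Fin N → ℝ) → ℝ) (hu : ContDiff ℝ 3 u) (hper : ZPeriodic u)
    (hadm : Admissible u)
    (heq : ∀ x, (amat u x).det = (1 + gradSq u x) ^ p) :
    ∀ x y, u x = u y := by
  obtain ⟨x₀, hmax⟩ := (zPeriodic_gradSq hper).exists_forall_le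
    (continuous_gradSq (hu.of_le (by norm_num)))
  have hmono : MonotoneOn (fun w : ℝ => (1 + w) ^ p) (Set.Ici 0) := fun a ha b _ hab =>
    Real.rpow_le_rpow (by linarith [Set.mem_Ici.mp ha]) (by linarith) (by linarith)
  have hH := hessian_eq_zero hu hmax (hadm x₀) hmono heq
  have hzero : gradSq u x₀ = 0 := Real.eq_zero_of_one_add_eq_rpow (gradSq_nonneg x₀) hp
    ((det_amat_of_hessian_eq_zero hH).symm.trans (heq x₀))
  have hfderiv : ∀ x, fderiv ℝ u x = 0 := fun x =>
    fderiv_eq_zero_of_gradSq_eq_zero (le_antisymm (hzero ▸ hmax x) (gradSq_nonneg x))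
  exact is_const_of_fderiv_eq_zero (hu.differentiable (by norm_num)) hfderiv

/-- Rigidity: a periodic admissible solution of `det A[u] = (1 + ‖∇u‖²)^p` with `p > 1`
is constant. -/
theorem stmt10 {N : ℕ} (hN : 1 ≤ N) (p : ℝ) (hp : 1 < p)
    (u : (Fin N → ℝ) → ℝ) (hu : ContDiff ℝ 3 u) (hper : ZPeriodic u)
    (hadm : Admissible u)
    (heq : ∀ x, (amat u x).det = (1 + gradSq u x) ^ p) :
    ∀ x y, u x = u y :=
  stmt10_general p hp u hu hper hadm heq
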